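/- arXiv:2209.08380 — 2 statements merged into one kernel-verified Lean document; each statement's English description precedes it below -/
import Mathlib

section
/- Suppose the marginal utility of forming link ij satisfies ΔU_{ij}(G) = Σ_{k=1}^{r} (Σ_{l=1}^{r} s_{lk} a_{jl}) a_{ik} y_{ik} for fixed reals s_{lk}, a_{il}, y_{ik}. Define Θ(G) = Σ_{i=1}^{n} Σ_{k=1}^{r} Σ_{l=1}^{r} s_{lk} (Σ_{j=1}^{n} G_{ij} a_{jl} a_{ik}) y_{ik} for a symmetric {0,1}-valued adjacency matrix G with zero diagonal. Then for any two networks G and G' differing only in the single link ij (G'_{ij} = G'_{ji} = 1, G_{ij} = G_{ji} = 0, all other entries equal), Θ(G') − Θ(G) = ΔU_{ij}(G) + ΔU_{ji}(G). -/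
open Finset

/-- `Θ` is an exact potential for the linking game.  If `G'` is obtained
from `G` by adding the single (symmetric) link `ij`, then
`Θ(G') − Θ(G) = ΔU_ij(G) + ΔU_ji(G)` where
`ΔU_ij(G) = Σ_k (Σ_l s_{lk} a_{jl}) a_{ik} y_{ik}`. -/
theorem stmt2 (n r : ℕ) (s : Fin r → Fin r → ℝ)
    (a y : Fin n → Fin r → ℝ)
    (G G' : Matrix (Fin n) (Fin n) ℝ)
    (hGsym : ∀ i j, G i j = G j i) (hG'sym : ∀ i j, G' i j = G' j i)
    (hGdiag : ∀ i, G i i = 0) (hG'diag : ∀ i, G' i i = 0)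
    (hGval : ∀ i j, G i j = 0 ∨ G i j = 1)
    (i j : Fin n) (hij : i ≠ j)
    (hGij : G i j = 0) (hGji : G j i = 0)
    (hG'ij : G' i j = 1) (hG'ji : G' j i = 1)
    (hrest : ∀ i' j', ¬((i' = i ∧ j' = j) ∨ (i' = j ∧ j' = i)) → G' i' j' = G i' j') :
    (∑ i' : Fin n, ∑ k : Fin r, ∑ l : Fin r,
        s l k * (∑ j' : Fin n, G' i' j' * a j' l * a i' k) * y i' k) -
      (∑ i' : Fin n, ∑ k : Fin r, ∑ l : Fin r,
        s l k * (∑ j' : Fin n, G i' j' * a j' l * a i' k) * y i' k) =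
    (∑ k : Fin r, (∑ l : Fin r, s l k * a j l) * a i k * y i k) +
      (∑ k : Fin r, (∑ l : Fin r, s l k * a i l) * a j k * y j k) := by
  have hD : ∀ i' j', G' i' j' - G i' j' =
      (if i' = i ∧ j' = j then (1:ℝ) else 0) + (if i' = j ∧ j' = i then 1 else 0) := by
    intro i' j'
    by_cases h1 : i' = i ∧ j' = j
    · obtain ⟨hi, hj⟩ := h1; subst hi; subst hj
      simp [hG'ij, hGij, hij]
    · by_cases h2 : i' = j ∧ j' = i
      · obtain ⟨hi, hj⟩ := h2; subst hi; subst hj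
        simp [hG'ji, hGji, hij, h1]
      · rw [hrest i' j' (by tauto)]
        simp [h1, h2]
  have step : ∀ i' : Fin n, ∀ k l : Fin r,
      s l k * (∑ j' : Fin n, G' i' j' * a j' l * a i' k) * y i' k -
      s l k * (∑ j' : Fin n, G i' j' * a j' l * a i' k) * y i' k =
      ((if i' = i then s l k * (a j l * a i' k) * y i' k else 0) +
       (if i' = j then s l k * (a i l * a i' k) * y i' k else 0)) := by
    intro i' k l
    have : (∑ j' : Fin n, G' i' j' * a j' l * a i' k) -
        (∑ j' : Fin n, G i' j' * a j' l * a i' k) =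
        (if i' = i then a j l * a i' k else 0) +
        (if i' = j then a i l * a i' k else 0) := by
      rw [← Finset.sum_sub_distrib]
      have : ∀ j' : Fin n, G' i' j' * a j' l * a i' k - G i' j' * a j' l * a i' k
          = (G' i' j' - G i' j') * (a j' l * a i' k) := by intro j'; ring
      simp_rw [this, hD, add_mul, Finset.sum_add_distrib, ite_mul, zero_mul, ite_and]
      simp [Finset.sum_ite_eq']
    rw [show s l k * (∑ j' : Fin n, G' i' j' * a j' l * a i' k) * y i' k -
        s l k * (∑ j' : Fin n, G i' j' * a j' l * a i' k) * y i' k =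
        s l k * ((∑ j' : Fin n, G' i' j' * a j' l * a i' k) -
          (∑ j' : Fin n, G i' j' * a j' l * a i' k)) * y i' k by ring, this]
    by_cases h1 : i' = i <;> by_cases h2 : i' = j <;> simp [h1, h2, hij, Ne.symm hij] <;> ring
  rw [← Finset.sum_sub_distrib]
  simp_rw [← Finset.sum_sub_distrib]
  rw [show (∑ i' : Fin n, ∑ k : Fin r, ∑ l : Fin r,
      (s l k * (∑ j' : Fin n, G' i' j' * a j' l * a i' k) * y i' k -
       s l k * (∑ j' : Fin n, G i' j' * a j' l * a i' k) * y i' k)) =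
      ∑ i' : Fin n, ∑ k : Fin r, ∑ l : Fin r,
      ((if i' = i then s l k * (a j l * a i' k) * y i' k else 0) +
       (if i' = j then s l k * (a i l * a i' k) * y i' k else 0)) from
    Finset.sum_congr rfl fun i' _ => Finset.sum_congr rfl fun k _ =>
      Finset.sum_congr rfl fun l _ => step i' k l]
  rw [show (∑ i' : Fin n, ∑ k : Fin r, ∑ l : Fin r,
      ((if i' = i then s l k * (a j l * a i' k) * y i' k else 0) +
       (if i' = j then s l k * (a i l * a i' k) * y i' k else 0))) =
      ∑ i' : Fin n,
      ((if i' = i then ∑ k : Fin r, ∑ l : Fin r, s l k * (a j l * a i' k) * y i' k else 0) +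
       (if i' = j then ∑ k : Fin r, ∑ l : Fin r, s l k * (a i l * a i' k) * y i' k else 0)) from
    Finset.sum_congr rfl fun i' _ => by
      by_cases h1 : i' = i <;> by_cases h2 : i' = j <;>
        simp [h1, h2, Finset.sum_add_distrib]]
  simp_rw [Finset.sum_add_distrib, Finset.sum_ite_eq', Finset.mem_univ, if_true]
  congr 1
  · refine Finset.sum_congr rfl fun k _ => ?_
    rw [Finset.sum_mul, Finset.sum_mul]
    exact Finset.sum_congr rfl fun l _ => by ring
  · refine Finset.sum_congr rfl fun k _ => ?_
    rw [Finset.sum_mul, Finset.sum_mul]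
    exact Finset.sum_congr rfl fun l _ => by ring
end

section
/- Let F be a probability measure on E, let PS : E → Set of full networks on n players, and for a subnetwork g_τ on a subset of players define PS_{g_τ}(ε) to mean there exists a complement g_τ^c with (g_τ, g_τ^c) ∈ PS(ε). Let σ be a selection with σ(ε) ∈ PS(ε), and let P(g_τ) = F({ε : σ(ε) restricted to the subnetwork coordinates equals g_τ}). Then F({ε : g_τ is the unique subnetwork h with PS_h(ε)}) ≤ P(g_τ) ≤ F({ε : PS_{g_τ}(ε)}). -/
open MeasureTheory

/-- Lemma 1: bounds on subnetwork choice probabilities.  `res` restricts a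
full network to the subnetwork coordinates; `PS_h(ε)` holds iff some pairwise-stable full
network restricts to `h`.  The probability of observing the subnetwork `gτ` is bounded
below by the probability that `gτ` is the unique subnetwork that can be part of a PS
network, and above by the probability that `gτ` can be part of a PS network. -/
theorem stmt13 {E : Type*} [MeasurableSpace E] (μ : Measure E) [IsProbabilityMeasure μ]
    {Full Sub : Type*} [Fintype Full] [Fintype Sub]
    (PS : E → Set Full) (res : Full → Sub) (σ : E → Full)
    (hσ : ∀ ε, σ ε ∈ PS ε)
    (gτ : Sub) :
    μ {ε | {h : Sub | ∃ hfull ∈ PS ε, res hfull = h} = {gτ}} ≤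
        μ {ε | res (σ ε) = gτ} ∧
      μ {ε | res (σ ε) = gτ} ≤ μ {ε | ∃ hfull ∈ PS ε, res hfull = gτ} := by
  constructor
  · apply measure_mono
    intro ε hε
    have : res (σ ε) ∈ {h : Sub | ∃ hfull ∈ PS ε, res hfull = h} := ⟨σ ε, hσ ε, rfl⟩
    rw [hε] at this
    exact this
  · apply measure_mono
    intro ε hε
    exact ⟨σ ε, hσ ε, hε⟩
end
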